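/- arXiv:1110.6540 — 2 statements merged into one kernel-verified Lean document; each statement's English description precedes it below -/
import Mathlib

section
/- Let η(x,a,c) = c·sech(c(x−a)) with c > 0 and let ∂ₓ⁻¹f(x) = (1/2)(∫_{−∞}^x f − ∫_x^∞ f). Then ∂ₓ⁻¹(∂_cη)(x) = c⁻¹(x−a)·η(x,a,c) for all x ∈ ℝ, where ∂_cη is the partial derivative of η in c. -/
/-- The antiderivative `∂ₓ⁻¹ f (x) = (1/2)(∫_{-∞}^x f - ∫_x^∞ f)`. -/
noncomputable def invDx (f : ℝ → ℝ) (x : ℝ) : ℝ :=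
  (1 / 2) * ((∫ y in Set.Iic x, f y) - ∫ y in Set.Ici x, f y)

/-!
With `φ t = t / cosh t`, both `∂_c (c / cosh (c (y - a)))` and `∂_y (c⁻¹ φ (c (y - a)))`
equal `φ' (c (y - a))`. As `φ` and `φ'` decay like `exp (-|t| / 2)`, the fundamental theorem
of calculus on the two half-lines gives `∂ₓ⁻¹ (∂_c η) = c⁻¹ φ (c (x - a)) = c⁻¹ (x - a) η`.
-/

open Real MeasureTheory Filter Topology

theorem invDx_eq_of_hasDerivAt_of_tendsto {F f : ℝ → ℝ} (hF : ∀ y, HasDerivAt F (f y) y)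
    (hf : Integrable f) (hF_lim : Tendsto F (cocompact ℝ) (𝓝 0)) (x : ℝ) :
    invDx f x = F x := by
  have h_Iic : ∫ y in Set.Iic x, f y = F x - 0 :=
    integral_Iic_of_hasDerivAt_of_tendsto' (fun y _ => hF y) hf.integrableOn
      (hF_lim.mono_left atBot_le_cocompact)
  have h_Ici : ∫ y in Set.Ici x, f y = 0 - F x := by
    rw [integral_Ici_eq_integral_Ioi]
    exact integral_Ioi_of_hasDerivAt_of_tendsto' (fun y _ => hF y) hf.integrableOn
      (hF_lim.mono_left atTop_le_cocompact)
  rw [invDx, h_Iic, h_Ici]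
  ring

namespace Real

noncomputable def divCoshDeriv (t : ℝ) : ℝ :=
  (cosh t - t * sinh t) / cosh t ^ 2

theorem hasDerivAt_div_cosh (t : ℝ) :
    HasDerivAt (fun s => s / cosh s) (divCoshDeriv t) t :=
  ((hasDerivAt_id' t).div (hasDerivAt_cosh t) (cosh_pos t).ne').congr_deriv <| by
    simp [divCoshDeriv]

theorem hasDerivAt_div_cosh_mul (u c : ℝ) :
    HasDerivAt (fun c' => c' / cosh (c' * u)) (divCoshDeriv (c * u)) c := by
  have h_cosh : HasDerivAt (fun c' => cosh (c' * u)) (sinh (c * u) * u) c :=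
    (hasDerivAt_cosh _).comp c (hasDerivAt_mul_const u)
  refine ((hasDerivAt_id' c).div h_cosh (cosh_pos _).ne').congr_deriv ?_
  simp only [divCoshDeriv]
  ring

theorem hasDerivAt_inv_mul_div_cosh_mul_sub {c : ℝ} (hc : c ≠ 0) (a y : ℝ) :
    HasDerivAt (fun z => c⁻¹ * (c * (z - a) / cosh (c * (z - a))))
      (divCoshDeriv (c * (y - a))) y := by
  have h_affine : HasDerivAt (fun z => c * (z - a)) c y := by
    simpa using ((hasDerivAt_id y).sub_const a).const_mul c
  exact (((hasDerivAt_div_cosh _).comp y h_affine).const_mul c⁻¹).congr_deriv (by field_simp)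

theorem one_add_abs_div_cosh_le (t : ℝ) : (1 + |t|) / cosh t ≤ 4 * exp (-|t| / 2) := by
  have h_num : 1 + |t| ≤ 2 * exp (|t| / 2) := by
    nlinarith [add_one_le_exp (|t| / 2), exp_pos (|t| / 2)]
  have h_cosh : exp |t| / 2 ≤ cosh t := by
    rw [← cosh_abs, cosh_eq]
    linarith [exp_pos (-|t|)]
  calc (1 + |t|) / cosh t ≤ 2 * exp (|t| / 2) / (exp |t| / 2) :=
        div_le_div₀ (by positivity) h_num (by positivity) h_cosh
    _ = 4 * exp (-|t| / 2) := by
        rw [show |t| = |t| / 2 + |t| / 2 by ring, exp_add, neg_div, exp_neg]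
        field_simp
        ring_nf

theorem abs_div_cosh_le (t : ℝ) : |t / cosh t| ≤ 4 * exp (-|t| / 2) := by
  refine le_trans ?_ (one_add_abs_div_cosh_le t)
  rw [abs_div, abs_of_pos (cosh_pos t)]
  gcongr
  linarith

theorem abs_divCoshDeriv_le (t : ℝ) : |divCoshDeriv t| ≤ 4 * exp (-|t| / 2) := by
  have h_cosh := cosh_pos t
  have h_sinh : |sinh t| ≤ cosh t := by
    rw [abs_sinh, ← cosh_abs]
    exact (sinh_lt_cosh _).le
  have h_num : |cosh t - t * sinh t| ≤ (1 + |t|) * cosh t :=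
    calc |cosh t - t * sinh t| ≤ |cosh t| + |t| * |sinh t| :=
          (abs_sub _ _).trans_eq (by rw [abs_mul])
      _ ≤ cosh t + |t| * cosh t := by rw [abs_of_pos h_cosh]; gcongr
      _ = (1 + |t|) * cosh t := by ring
  calc |divCoshDeriv t| ≤ (1 + |t|) * cosh t / cosh t ^ 2 := by
        rw [divCoshDeriv, abs_div, abs_of_pos (pow_pos h_cosh 2)]
        gcongr
    _ = (1 + |t|) / cosh t := by field_simp
    _ ≤ 4 * exp (-|t| / 2) := one_add_abs_div_cosh_le t

theorem integrable_exp_neg_abs_div_two : Integrable fun t : ℝ => exp (-|t| / 2) := by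
  refine (continuous_exp.comp (by fun_prop)).locallyIntegrable
    |>.integrable_of_isBigO_atTop_of_norm_isNegInvariant (g := fun t => exp (-(1 / 2) * t)) ?_ ?_ ?_
  · exact Eventually.of_forall fun t => by simp
  · refine EventuallyEq.isBigO ?_
    filter_upwards [eventually_ge_atTop 0] with t ht
    simp only [Function.comp_apply, abs_of_nonneg ht]
    ring_nf
  · exact ⟨Set.Ioi 0, Ioi_mem_atTop 0, exp_neg_integrableOn_Ioi 0 one_half_pos⟩

theorem integrable_divCoshDeriv : Integrable divCoshDeriv := by
  refine (integrable_exp_neg_abs_div_two.const_mul 4).mono' ?_ (Eventually.of_forall fun t => ?_)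
  · exact ((continuous_cosh.sub (continuous_id.mul continuous_sinh)).div (continuous_cosh.pow 2)
      fun t => pow_ne_zero _ (cosh_pos t).ne').aestronglyMeasurable
  · exact abs_divCoshDeriv_le t

theorem tendsto_div_cosh_cocompact : Tendsto (fun t => t / cosh t) (cocompact ℝ) (𝓝 0) := by
  refine squeeze_zero_norm abs_div_cosh_le ?_
  have h_exp : Tendsto (fun t : ℝ => exp (-(|t| / 2))) (cocompact ℝ) (𝓝 0) :=
    tendsto_exp_neg_atTop_nhds_zero.comp <|
      (tendsto_norm_cocompact_atTop.atTop_div_const two_pos)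
  simpa [neg_div] using h_exp.const_mul 4

end Real

theorem invDx_partial_c_eta (a c : ℝ) (hc : 0 < c)
    (η : ℝ → ℝ → ℝ → ℝ)
    (hη : ∀ x a c, η x a c = c * (1 / Real.cosh (c * (x - a)))) :
    ∀ x : ℝ,
      invDx (fun y : ℝ => deriv (fun c' : ℝ => η y a c') c) x
        = c⁻¹ * (x - a) * η x a c := by
  intro x
  have h_partial_c : (fun y => deriv (fun c' => η y a c') c) =
      fun y => divCoshDeriv (c * (y - a)) := by
    funext y
    simp only [hη, mul_one_div]
    exact (hasDerivAt_div_cosh_mul (y - a) c).deriv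
  have h_affine : Tendsto (fun z => c * (z - a)) (cocompact ℝ) (cocompact ℝ) :=
    ((Homeomorph.subRight a).trans (Homeomorph.mulLeft₀ c hc.ne')).isClosedEmbedding
      |>.tendsto_cocompact
  rw [h_partial_c, invDx_eq_of_hasDerivAt_of_tendsto (hasDerivAt_inv_mul_div_cosh_mul_sub hc.ne' a)
    ((integrable_divCoshDeriv.comp_mul_left' hc.ne').comp_sub_right a) ?_, hη]
  · field_simp
  · simpa using (tendsto_div_cosh_cocompact.comp h_affine).const_mul c⁻¹
end

section
/- Let a, c : [0,T] → ℝ and ā = a − ã, c̄ = c − c̃, and suppose (ā, c̄) satisfies a linear ODE system with coefficient matrix A(t) whose entries satisfy |A₁₁(t)| ≤ Kε, |A₁₂(t)| ≤ K, |A₂₁(t)| ≤ Kε, |A₂₂(t)| ≤ Kε. Define p(t) = (ε·ā(t)² + c̄(t)²)^{1/2}. Then whenever p(t) > 0, |p'(t)| ≤ C(K)·(ε^{1/2}p(t) + ε^{1/2}|R₁(t)| + |R₂(t)|), where (R₁, R₂) is the inhomogeneous term of the system. -/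
/-!
Since `p p' = (√ε ā)(√ε ā') + c̄ c̄'` with `√ε |ā| ≤ p` and `|c̄| ≤ p`, Cauchy–Schwarz gives
`|p'| ≤ √ε |ā'| + |c̄'|`. In this weighted form the only coefficient of size `K` rather than `Kε`,
namely `A₁₂`, is multiplied by `√ε`; together with `√ε |ā| ≤ p`, `|c̄| ≤ p` and `ε ≤ √ε`, every
homogeneous term is at most `K √ε p`.
-/

open Real

lemma sqrt_mul_abs_le_sqrt_add_sq {ε : ℝ} (hε : 0 ≤ ε) (a c : ℝ) :
    √ε * |a| ≤ √(ε * a ^ 2 + c ^ 2) := by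
  rw [← abs_of_nonneg (sqrt_nonneg ε), ← abs_mul]
  refine abs_le_sqrt ?_
  rw [mul_pow, sq_sqrt hε]
  nlinarith [sq_nonneg c]

lemma abs_le_sqrt_mul_sq_add_sq {ε : ℝ} (hε : 0 ≤ ε) (a c : ℝ) :
    |c| ≤ √(ε * a ^ 2 + c ^ 2) :=
  abs_le_sqrt (by nlinarith [mul_nonneg hε (sq_nonneg a)])

lemma abs_deriv_sqrt_mul_sq_add_sq_le {f g : ℝ → ℝ} {f' g' ε t : ℝ} (hε : 0 ≤ ε)
    (hf : HasDerivAt f f' t) (hg : HasDerivAt g g' t) (hpos : 0 < ε * f t ^ 2 + g t ^ 2) :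
    |deriv (fun s => √(ε * f s ^ 2 + g s ^ 2)) t| ≤ √ε * |f'| + |g'| := by
  have hq : HasDerivAt (fun s => ε * f s ^ 2 + g s ^ 2) (2 * (ε * f t * f' + g t * g')) t := by
    have h : HasDerivAt (fun s => ε * f s ^ 2 + g s ^ 2) _ t :=
      ((hf.pow 2).const_mul ε).add (hg.pow 2)
    convert h using 1
    push_cast
    ring
  rw [(hq.sqrt hpos.ne').deriv]
  set p := √(ε * f t ^ 2 + g t ^ 2)
  have hp : 0 < p := sqrt_pos.mpr hpos
  rw [abs_div, abs_mul, abs_mul, abs_two, abs_of_pos hp,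
    mul_div_mul_left _ _ two_ne_zero, div_le_iff₀ hp]
  have hfp := sqrt_mul_abs_le_sqrt_add_sq hε (f t) (g t)
  have hgp := abs_le_sqrt_mul_sq_add_sq hε (f t) (g t)
  calc |ε * f t * f' + g t * g'| ≤ |ε * f t * f'| + |g t * g'| := abs_add_le _ _
    _ = (√ε * |f t|) * (√ε * |f'|) + |g t| * |g'| := by
        rw [mul_mul_mul_comm, mul_self_sqrt hε, abs_mul, abs_mul, abs_mul, abs_of_nonneg hε,
          mul_assoc]
    _ ≤ p * (√ε * |f'|) + p * |g'| := by gcongr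
    _ = (√ε * |f'| + |g'|) * p := by ring

lemma abs_mul_add_mul_add_le {α β x y r M N : ℝ} (hα : |α| ≤ M) (hβ : |β| ≤ N) :
    |α * x + β * y + r| ≤ M * |x| + N * |y| + |r| :=
  calc |α * x + β * y + r| ≤ |α * x| + |β * y| + |r| := abs_add_three _ _ _
    _ ≤ M * |x| + N * |y| + |r| := by
      rw [abs_mul, abs_mul]
      gcongr

section RhsBounds

variable {ε K a c p α β γ δ r : ℝ}

lemma sqrt_mul_abs_rhs_fst_le (hε1 : ε ≤ 1) (ha : √ε * |a| ≤ p) (hc : |c| ≤ p)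
    (hα : |α| ≤ K * ε) (hβ : |β| ≤ K) :
    √ε * |α * a + β * c + r| ≤ 2 * K * √ε * p + √ε * |r| := by
  have hK : 0 ≤ K := (abs_nonneg _).trans hβ
  calc √ε * |α * a + β * c + r| ≤ √ε * (K * ε * |a| + K * |c| + |r|) := by
        gcongr
        exact abs_mul_add_mul_add_le hα hβ
    _ = K * ε * (√ε * |a|) + K * √ε * |c| + √ε * |r| := by ring
    _ ≤ K * √ε * p + K * √ε * p + √ε * |r| := by
        have hεs : ε ≤ √ε := le_sqrt_self_iff.mpr hε1
        gcongr
    _ = 2 * K * √ε * p + √ε * |r| := by ring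

lemma abs_rhs_snd_le (hε : 0 ≤ ε) (hε1 : ε ≤ 1) (hK : 0 ≤ K) (ha : √ε * |a| ≤ p) (hc : |c| ≤ p)
    (hγ : |γ| ≤ K * ε) (hδ : |δ| ≤ K * ε) :
    |γ * a + δ * c + r| ≤ 2 * K * √ε * p + |r| := by
  have hεs : ε ≤ √ε := le_sqrt_self_iff.mpr hε1
  calc |γ * a + δ * c + r| ≤ K * ε * |a| + K * ε * |c| + |r| := abs_mul_add_mul_add_le hγ hδ
    _ = K * √ε * (√ε * |a|) + K * ε * |c| + |r| := by
        linear_combination (-K * |a|) * mul_self_sqrt hε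
    _ ≤ K * √ε * p + K * √ε * p + |r| := by gcongr
    _ = 2 * K * √ε * p + |r| := by ring

end RhsBounds

/-- Derivative bound on `p(t) = (ε ā² + c̄²)^{1/2}` for the linear ODE system
`ā' = A₁₁ā + A₁₂c̄ + R₁`, `c̄' = A₂₁ā + A₂₂c̄ + R₂` with
`|A₁₁|,|A₂₁|,|A₂₂| ≤ Kε`, `|A₁₂| ≤ K`. -/
theorem p_deriv_bound (K : ℝ) (hK : 0 < K) :
    ∃ C : ℝ, 0 < C ∧
      ∀ (T ε : ℝ) (hε : 0 < ε) (hε1 : ε ≤ 1)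
        (abar cbar A11 A12 A21 A22 R1 R2 : ℝ → ℝ),
        (∀ t ∈ Set.Icc 0 T,
          HasDerivAt abar (A11 t * abar t + A12 t * cbar t + R1 t) t) →
        (∀ t ∈ Set.Icc 0 T,
          HasDerivAt cbar (A21 t * abar t + A22 t * cbar t + R2 t) t) →
        (∀ t ∈ Set.Icc 0 T, |A11 t| ≤ K * ε) →
        (∀ t ∈ Set.Icc 0 T, |A12 t| ≤ K) →
        (∀ t ∈ Set.Icc 0 T, |A21 t| ≤ K * ε) →
        (∀ t ∈ Set.Icc 0 T, |A22 t| ≤ K * ε) →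
        ∀ t ∈ Set.Icc 0 T,
          Real.sqrt (ε * (abar t) ^ 2 + (cbar t) ^ 2) > 0 →
          |deriv (fun s => Real.sqrt (ε * (abar s) ^ 2 + (cbar s) ^ 2)) t|
            ≤ C * (Real.sqrt ε * Real.sqrt (ε * (abar t) ^ 2 + (cbar t) ^ 2)
                + Real.sqrt ε * |R1 t| + |R2 t|) := by
  refine ⟨4 * K + 1, by linarith, ?_⟩
  intro T ε hε hε1 abar cbar A11 A12 A21 A22 R1 R2 ha hc h11 h12 h21 h22 t ht hp
  set p := √(ε * abar t ^ 2 + cbar t ^ 2)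
  have hap := sqrt_mul_abs_le_sqrt_add_sq hε.le (abar t) (cbar t)
  have hcp := abs_le_sqrt_mul_sq_add_sq hε.le (abar t) (cbar t)
  have hfst := sqrt_mul_abs_rhs_fst_le (r := R1 t) hε1 hap hcp (h11 t ht) (h12 t ht)
  have hsnd := abs_rhs_snd_le (r := R2 t) hε.le hε1 hK.le hap hcp (h21 t ht) (h22 t ht)
  calc _ ≤ √ε * |A11 t * abar t + A12 t * cbar t + R1 t|
          + |A21 t * abar t + A22 t * cbar t + R2 t| :=
        abs_deriv_sqrt_mul_sq_add_sq_le hε.le (ha t ht) (hc t ht) (sqrt_pos.mp hp)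
    _ ≤ 4 * K * √ε * p + √ε * |R1 t| + |R2 t| := by linarith
    _ ≤ (4 * K + 1) * (√ε * p + √ε * |R1 t| + |R2 t|) := by
        have hR : 0 ≤ √ε * |R1 t| + |R2 t| := by positivity
        nlinarith [mul_nonneg hK.le hR, mul_nonneg (sqrt_nonneg ε) hp.le]
end
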